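/- arXiv:2209.04722 — 4 statements merged into one kernel-verified Lean document; each statement's English description precedes it below -/
import Mathlib

section
/- For q > 1 the batch expected improvement functional F is concave on the set of Borel probability measures on D: for all Borel probability measures μ₀, μ₁ on D and all λ ∈ [0,1], F[λμ₁ + (1−λ)μ₀] ≥ λF[μ₁] + (1−λ)F[μ₀]. -/
open MeasureTheory
open scoped ENNReal

section aux
variable {E : Type*} [MeasurableSpace E]


lemma survival_aux (μ : Measure E) [IsProbabilityMeasure μ]
    {q : ℕ} (hq : 0 < q) (g : E → ℝ) (hg : Measurable g) (c t : ℝ) (ht : 0 < t) :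
    (Measure.pi fun _ : Fin q => μ) {x | t < max 0 (c - ⨅ i, g (x i))}
      = 1 - (μ {y | c - t ≤ g y}) ^ q := by
  haveI : Nonempty (Fin q) := ⟨⟨0, hq⟩⟩
  have hs : MeasurableSet {y | c - t ≤ g y} := measurableSet_le measurable_const hg
  have hset : {x : Fin q → E | t < max 0 (c - ⨅ i, g (x i))}
      = (Set.pi Set.univ fun _ => {y | c - t ≤ g y})ᶜ := by
    ext x
    simp only [Set.mem_setOf_eq, Set.mem_compl_iff, Set.mem_pi, Set.mem_univ, true_implies]
    rw [← not_le, not_iff_not]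
    constructor
    · intro h
      have h2 : c - ⨅ i, g (x i) ≤ t := le_trans (le_max_right _ _) h
      intro i
      have : c - t ≤ ⨅ i, g (x i) := by linarith
      exact le_trans this (ciInf_le (Set.Finite.bddBelow (Set.finite_range _)) i)
    · intro h
      have : c - t ≤ ⨅ i, g (x i) := le_ciInf h
      exact max_le ht.le (by linarith)
  rw [hset, measure_compl ((MeasurableSet.univ_pi fun _ => hs)) (measure_ne_top _ _),
    measure_univ, Measure.pi_pi]
  simp [Finset.prod_const]

lemma concave_aux (lam : ℝ) (hl0 : 0 ≤ lam) (hl1 : lam ≤ 1) (q : ℕ)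
    (A B : ℝ≥0∞) (hA : A ≤ 1) (hB : B ≤ 1) :
    ENNReal.ofReal lam * (1 - A ^ q) + ENNReal.ofReal (1 - lam) * (1 - B ^ q)
      ≤ 1 - (ENNReal.ofReal lam * A + ENNReal.ofReal (1 - lam) * B) ^ q := by
  set a := A.toReal with ha_def
  set b := B.toReal with hb_def
  have hAfin : A ≠ ⊤ := (lt_of_le_of_lt hA ENNReal.one_lt_top).ne
  have hBfin : B ≠ ⊤ := (lt_of_le_of_lt hB ENNReal.one_lt_top).ne
  have hA' : A = ENNReal.ofReal a := (ENNReal.ofReal_toReal hAfin).symm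
  have hB' : B = ENNReal.ofReal b := (ENNReal.ofReal_toReal hBfin).symm
  have ha0 : 0 ≤ a := ENNReal.toReal_nonneg
  have hb0 : 0 ≤ b := ENNReal.toReal_nonneg
  have ha1 : a ≤ 1 := by rw [ha_def]; exact ENNReal.toReal_le_of_le_ofReal one_pos.le (by simpa)
  have hb1 : b ≤ 1 := by rw [hb_def]; exact ENNReal.toReal_le_of_le_ofReal one_pos.le (by simpa)
  have hsq : (lam * a + (1 - lam) * b) ^ q ≤ lam * a ^ q + (1 - lam) * b ^ q := by
    have := (convexOn_pow q).2 (Set.mem_Ici.mpr ha0) (Set.mem_Ici.mpr hb0) hl0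
      (by linarith : (0:ℝ) ≤ 1 - lam) (by ring)
    simpa [smul_eq_mul] using this
  have haq : a ^ q ≤ 1 := pow_le_one₀ ha0 ha1
  have hbq : b ^ q ≤ 1 := pow_le_one₀ hb0 hb1
  rw [hA', hB']
  rw [← ENNReal.ofReal_pow ha0, ← ENNReal.ofReal_pow hb0, ← ENNReal.ofReal_one,
    ← ENNReal.ofReal_sub _ (pow_nonneg ha0 q), ← ENNReal.ofReal_sub _ (pow_nonneg hb0 q),
    ← ENNReal.ofReal_mul hl0, ← ENNReal.ofReal_mul (by linarith : (0:ℝ) ≤ 1 - lam),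
    ← ENNReal.ofReal_mul hl0, ← ENNReal.ofReal_mul (by linarith : (0:ℝ) ≤ 1 - lam),
    ← ENNReal.ofReal_add (by nlinarith) (by nlinarith),
    ← ENNReal.ofReal_add (mul_nonneg hl0 ha0) (mul_nonneg (by linarith) hb0),
    ← ENNReal.ofReal_pow (by nlinarith),
    ← ENNReal.ofReal_sub _ (pow_nonneg (by nlinarith) q)]
  exact ENNReal.ofReal_le_ofReal (by nlinarith)

lemma lintegral_key (μ₀ μ₁ : Measure E) [IsProbabilityMeasure μ₀] [IsProbabilityMeasure μ₁]
    (lam : ℝ) (hl0 : 0 ≤ lam) (hl1 : lam ≤ 1) {q : ℕ} (hq : 0 < q)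
    (c : ℝ) (g : E → ℝ) (hg : Measurable g) :
    ENNReal.ofReal lam *
        ∫⁻ x : Fin q → E, ENNReal.ofReal (max 0 (c - ⨅ i, g (x i))) ∂(Measure.pi fun _ => μ₁)
      + ENNReal.ofReal (1 - lam) *
        ∫⁻ x : Fin q → E, ENNReal.ofReal (max 0 (c - ⨅ i, g (x i))) ∂(Measure.pi fun _ => μ₀)
      ≤ ∫⁻ x : Fin q → E, ENNReal.ofReal (max 0 (c - ⨅ i, g (x i)))
          ∂(Measure.pi fun _ => (ENNReal.ofReal lam • μ₁ + ENNReal.ofReal (1 - lam) • μ₀)) := by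
  haveI : Nonempty (Fin q) := ⟨⟨0, hq⟩⟩
  set ν : Measure E := ENNReal.ofReal lam • μ₁ + ENNReal.ofReal (1 - lam) • μ₀ with hν
  haveI : IsProbabilityMeasure ν := by
    constructor
    simp only [hν, Measure.add_apply, Measure.smul_apply, smul_eq_mul, measure_univ, mul_one]
    rw [← ENNReal.ofReal_add hl0 (by linarith)]
    norm_num
  have hG : Measurable fun x : Fin q → E => max 0 (c - ⨅ i, g (x i)) :=
    measurable_const.max (measurable_const.sub
      (Measurable.iInf fun i => hg.comp (measurable_pi_apply i)))
  have layer : ∀ (μ : Measure E) [IsProbabilityMeasure μ],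
      (∫⁻ x : Fin q → E, ENNReal.ofReal (max 0 (c - ⨅ i, g (x i))) ∂(Measure.pi fun _ => μ))
        = ∫⁻ t in Set.Ioi (0:ℝ), (1 - (μ {y | c - t ≤ g y}) ^ q) := by
    intro μ _
    have h1 := lintegral_eq_lintegral_meas_lt (f := fun x : Fin q → E =>
        max 0 (c - ⨅ i, g (x i))) (Measure.pi fun _ => μ)
      (Filter.Eventually.of_forall fun x => le_max_left _ _) hG.aemeasurable
    rw [h1]
    exact setLIntegral_congr_fun measurableSet_Ioi
      (fun t ht => survival_aux μ hq g hg c t ht)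
  rw [layer μ₁, layer μ₀, layer ν]
  have hAnti : ∀ μ : Measure E, Antitone fun t : ℝ => 1 - (μ {y | c - t ≤ g y}) ^ q := by
    intro μ s t hst
    refine tsub_le_tsub_left (pow_le_pow_left₀ zero_le (measure_mono ?_) q) 1
    intro y hy
    simp only [Set.mem_setOf_eq] at hy ⊢
    linarith
  rw [← lintegral_const_mul' _ _ ENNReal.ofReal_ne_top,
    ← lintegral_const_mul' _ _ ENNReal.ofReal_ne_top,
    ← lintegral_add_left (((hAnti μ₁).measurable).const_mul _)]
  refine lintegral_mono fun t => ?_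
  have hν_apply : ν {y | c - t ≤ g y}
      = ENNReal.ofReal lam * μ₁ {y | c - t ≤ g y} + ENNReal.ofReal (1 - lam) * μ₀ {y | c - t ≤ g y} := by
    simp [hν, Measure.add_apply, Measure.smul_apply, smul_eq_mul]
  rw [hν_apply]
  exact concave_aux lam hl0 hl1 q _ _ prob_le_one prob_le_one


lemma real_key (μ₀ μ₁ : Measure E) [IsProbabilityMeasure μ₀] [IsProbabilityMeasure μ₁]
    (lam : ℝ) (hl0 : 0 ≤ lam) (hl1 : lam ≤ 1) {q : ℕ} (hq : 0 < q)
    (c C : ℝ) (g : E → ℝ) (hg : Measurable g) (hbdd : ∀ x, |g x| ≤ C) :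
    lam * ∫ x : Fin q → E, max 0 (c - ⨅ i, g (x i)) ∂(Measure.pi fun _ => μ₁)
      + (1 - lam) * ∫ x : Fin q → E, max 0 (c - ⨅ i, g (x i)) ∂(Measure.pi fun _ => μ₀)
      ≤ ∫ x : Fin q → E, max 0 (c - ⨅ i, g (x i))
          ∂(Measure.pi fun _ => (ENNReal.ofReal lam • μ₁ + ENNReal.ofReal (1 - lam) • μ₀)) := by
  haveI : Nonempty (Fin q) := ⟨⟨0, hq⟩⟩
  set ν : Measure E := ENNReal.ofReal lam • μ₁ + ENNReal.ofReal (1 - lam) • μ₀ with hν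
  haveI : IsProbabilityMeasure ν := by
    constructor
    simp only [hν, Measure.add_apply, Measure.smul_apply, smul_eq_mul, measure_univ, mul_one]
    rw [← ENNReal.ofReal_add hl0 (by linarith)]
    norm_num
  have hG : Measurable fun x : Fin q → E => max 0 (c - ⨅ i, g (x i)) :=
    measurable_const.max (measurable_const.sub
      (Measurable.iInf fun i => hg.comp (measurable_pi_apply i)))
  set M : ℝ := max 0 (c + C) with hM
  have hbound : ∀ x : Fin q → E, max 0 (c - ⨅ i, g (x i)) ≤ M := by
    intro x
    have hinf : -C ≤ ⨅ i, g (x i) := le_ciInf fun i => (abs_le.mp (hbdd (x i))).1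
    exact max_le (le_max_left _ _) (le_trans (by linarith) (le_max_right _ _))
  have hrepr : ∀ (μ : Measure E) [IsProbabilityMeasure μ],
      (∫ x : Fin q → E, max 0 (c - ⨅ i, g (x i)) ∂(Measure.pi fun _ => μ))
        = (∫⁻ x : Fin q → E, ENNReal.ofReal (max 0 (c - ⨅ i, g (x i)))
            ∂(Measure.pi fun _ => μ)).toReal := by
    intro μ _
    exact integral_eq_lintegral_of_nonneg_ae
      (Filter.Eventually.of_forall fun x => le_max_left _ _) hG.aestronglyMeasurable
  have hfin : ∀ (μ : Measure E) [IsProbabilityMeasure μ],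
      (∫⁻ x : Fin q → E, ENNReal.ofReal (max 0 (c - ⨅ i, g (x i)))
          ∂(Measure.pi fun _ => μ)) ≠ ⊤ := by
    intro μ _
    have hle : (∫⁻ x : Fin q → E, ENNReal.ofReal (max 0 (c - ⨅ i, g (x i)))
        ∂(Measure.pi fun _ => μ)) ≤ ENNReal.ofReal M := by
      calc (∫⁻ x : Fin q → E, ENNReal.ofReal (max 0 (c - ⨅ i, g (x i))) ∂(Measure.pi fun _ => μ))
          ≤ ∫⁻ _x : Fin q → E, ENNReal.ofReal M ∂(Measure.pi fun _ => μ) :=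
            lintegral_mono fun x => ENNReal.ofReal_le_ofReal (hbound x)
        _ = ENNReal.ofReal M := by simp [measure_univ]
    exact (lt_of_le_of_lt hle ENNReal.ofReal_lt_top).ne
  rw [hrepr μ₁, hrepr μ₀, hrepr ν]
  have key := lintegral_key μ₀ μ₁ lam hl0 hl1 hq c g hg
  calc lam * (∫⁻ x : Fin q → E, ENNReal.ofReal (max 0 (c - ⨅ i, g (x i)))
          ∂(Measure.pi fun _ => μ₁)).toReal
      + (1 - lam) * (∫⁻ x : Fin q → E, ENNReal.ofReal (max 0 (c - ⨅ i, g (x i)))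
          ∂(Measure.pi fun _ => μ₀)).toReal
      = (ENNReal.ofReal lam * ∫⁻ x : Fin q → E, ENNReal.ofReal (max 0 (c - ⨅ i, g (x i)))
            ∂(Measure.pi fun _ => μ₁)
        + ENNReal.ofReal (1 - lam) * ∫⁻ x : Fin q → E, ENNReal.ofReal (max 0 (c - ⨅ i, g (x i)))
            ∂(Measure.pi fun _ => μ₀)).toReal := by
        rw [ENNReal.toReal_add (ENNReal.mul_ne_top ENNReal.ofReal_ne_top (hfin μ₁))
            (ENNReal.mul_ne_top ENNReal.ofReal_ne_top (hfin μ₀)),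
          ENNReal.toReal_mul, ENNReal.toReal_mul,
          ENNReal.toReal_ofReal hl0, ENNReal.toReal_ofReal (by linarith)]
    _ ≤ _ := ENNReal.toReal_mono (hfin ν) key

end aux

/-- The batch expected improvement functional
`F[μ] = ∫_Ω ∫_{D^q} max(0, c − min_i f(ω, x_i)) dμ^{⊗q} dP(ω)`. -/
noncomputable def batchEI {Ω : Type*} [MeasurableSpace Ω] (P : Measure Ω)
    {d : ℕ} (c : ℝ) (q : ℕ) (f : Ω → EuclideanSpace ℝ (Fin d) → ℝ)
    (μ : Measure (EuclideanSpace ℝ (Fin d))) : ℝ :=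
  ∫ ω, (∫ x : Fin q → EuclideanSpace ℝ (Fin d),
      max 0 (c - ⨅ i, f ω (x i)) ∂(Measure.pi fun _ => μ)) ∂P

/-- For `q > 1` the batch expected improvement functional is concave on the set of Borel
probability measures supported on the compact set `D`. -/
theorem stmt0 {Ω : Type*} [MeasurableSpace Ω] (P : Measure Ω) [IsProbabilityMeasure P]
    {d : ℕ} (D : Set (EuclideanSpace ℝ (Fin d))) (hD : IsCompact D) (hDne : D.Nonempty)
    (c : ℝ) (q : ℕ) (hq : 1 < q)
    (f : Ω → EuclideanSpace ℝ (Fin d) → ℝ)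
    (hf_meas : Measurable (Function.uncurry f))
    (C : ℝ) (hf_bdd : ∀ ω x, |f ω x| ≤ C)
    (hf_cont : ∀ ω, ContinuousOn (f ω) D)
    (μ₀ μ₁ : Measure (EuclideanSpace ℝ (Fin d)))
    [IsProbabilityMeasure μ₀] [IsProbabilityMeasure μ₁]
    (hμ₀D : μ₀ D = 1) (hμ₁D : μ₁ D = 1)
    (lam : ℝ) (hlam : lam ∈ Set.Icc (0:ℝ) 1) :
    batchEI P c q f (ENNReal.ofReal lam • μ₁ + ENNReal.ofReal (1 - lam) • μ₀)
      ≥ lam * batchEI P c q f μ₁ + (1 - lam) * batchEI P c q f μ₀ := by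
  obtain ⟨hl0, hl1⟩ := hlam
  have hq' : 0 < q := lt_trans one_pos hq
  haveI : Nonempty (Fin q) := ⟨⟨0, hq'⟩⟩
  set ν : Measure (EuclideanSpace ℝ (Fin d)) := ENNReal.ofReal lam • μ₁ + ENNReal.ofReal (1 - lam) • μ₀ with hν
  haveI : IsProbabilityMeasure ν := by
    constructor
    simp only [hν, Measure.add_apply, Measure.smul_apply, smul_eq_mul, measure_univ, mul_one]
    rw [← ENNReal.ofReal_add hl0 (by linarith)]
    norm_num
  set M : ℝ := max 0 (c + C) with hM
  have hG' : Measurable fun p : Ω × (Fin q → EuclideanSpace ℝ (Fin d)) => max 0 (c - ⨅ i, f p.1 (p.2 i)) :=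
    measurable_const.max (measurable_const.sub (Measurable.iInf fun i =>
      hf_meas.comp (measurable_fst.prodMk ((measurable_pi_apply i).comp measurable_snd))))
  have hbound : ∀ (ω : Ω) (x : Fin q → EuclideanSpace ℝ (Fin d)), max 0 (c - ⨅ i, f ω (x i)) ≤ M := by
    intro ω x
    have hinf : -C ≤ ⨅ i, f ω (x i) := le_ciInf fun i => (abs_le.mp (hf_bdd ω (x i))).1
    exact max_le (le_max_left _ _) (le_trans (by linarith) (le_max_right _ _))
  have hInt : ∀ (μ : Measure (EuclideanSpace ℝ (Fin d))) [IsProbabilityMeasure μ],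
      Integrable (fun ω => ∫ x : Fin q → EuclideanSpace ℝ (Fin d), max 0 (c - ⨅ i, f ω (x i))
        ∂(Measure.pi fun _ => μ)) P := by
    intro μ _
    have hsm : StronglyMeasurable fun ω => ∫ x : Fin q → EuclideanSpace ℝ (Fin d), max 0 (c - ⨅ i, f ω (x i))
        ∂(Measure.pi fun _ => μ) :=
      StronglyMeasurable.integral_prod_right' (hG'.stronglyMeasurable)
    refine Integrable.mono' (integrable_const M) hsm.aestronglyMeasurable
      (Filter.Eventually.of_forall fun ω => ?_)
    calc ‖∫ x : Fin q → EuclideanSpace ℝ (Fin d), max 0 (c - ⨅ i, f ω (x i)) ∂(Measure.pi fun _ => μ)‖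
        ≤ M * ((Measure.pi fun _ : Fin q => μ) Set.univ).toReal :=
          norm_integral_le_of_norm_le_const (Filter.Eventually.of_forall fun x => by
            rw [Real.norm_eq_abs, abs_of_nonneg (le_max_left _ _)]; exact hbound ω x)
      _ = M := by simp [measure_univ]
  have hpoint : ∀ ω : Ω,
      lam * (∫ x : Fin q → EuclideanSpace ℝ (Fin d), max 0 (c - ⨅ i, f ω (x i)) ∂(Measure.pi fun _ => μ₁))
        + (1 - lam) * (∫ x : Fin q → EuclideanSpace ℝ (Fin d), max 0 (c - ⨅ i, f ω (x i)) ∂(Measure.pi fun _ => μ₀))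
      ≤ ∫ x : Fin q → EuclideanSpace ℝ (Fin d), max 0 (c - ⨅ i, f ω (x i)) ∂(Measure.pi fun _ => ν) := by
    intro ω
    exact real_key μ₀ μ₁ lam hl0 hl1 hq' c C (f ω)
      (hf_meas.comp measurable_prodMk_left) (hf_bdd ω)
  show lam * batchEI P c q f μ₁ + (1 - lam) * batchEI P c q f μ₀ ≤ batchEI P c q f ν
  unfold batchEI
  rw [← integral_const_mul lam, ← integral_const_mul (1 - lam),
    ← integral_add ((hInt μ₁).const_mul lam) ((hInt μ₀).const_mul (1 - lam))]
  exact integral_mono (((hInt μ₁).const_mul lam).add ((hInt μ₀).const_mul (1 - lam)))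
    (hInt ν) hpoint
end

section
/- The batch expected improvement functional admits the layered representation F[μ] = ∫_0^∞ ∫_Ω [ 𝟙[s < c − L̃(ω)] − ( ∫_D 𝟙[s < min(f(ω,x), c) − L̃(ω)] dμ(x) )^q ] dP(ω) ds for every Borel probability measure μ on D, where L̃(ω) := min_{x ∈ D} min(f(ω, x), c). -/
open MeasureTheory

private lemma lt_iInf_fin {q : ℕ} [Nonempty (Fin q)] {a : ℝ} {h : Fin q → ℝ} :
    a < ⨅ i, h i ↔ ∀ i, a < h i := by
  constructor
  · intro H i
    exact H.trans_le (ciInf_le (Set.finite_range h).bddBelow i)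
  · intro H
    obtain ⟨i, hi⟩ := exists_eq_ciInf_of_finite (f := h)
    rw [← hi]; exact H i

private lemma max_sub_min_eq (c a : ℝ) : max 0 (c - a) = c - min a c := by
  rcases le_total a c with h|h
  · rw [min_eq_left h, max_eq_right (by linarith)]
  · rw [min_eq_right h, max_eq_left (by linarith)]; ring

private lemma indicator_integral_Ioi (a : ℝ) (ha : 0 ≤ a) :
    ∫ s in Set.Ioi (0:ℝ), (if s < a then (1:ℝ) else 0) = a := by
  have h : (fun s : ℝ => if s < a then (1:ℝ) else 0)
      = (Set.Iio a).indicator (fun _ => (1:ℝ)) := by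
    funext s; simp [Set.indicator_apply]
  rw [h, integral_indicator_const _ measurableSet_Iio, Measure.real_def,
    Measure.restrict_apply measurableSet_Iio, Set.Iio_inter_Ioi, Real.volume_Ioo]
  simp [ENNReal.toReal_ofReal ha]

/-- Layered representation of the batch expected improvement functional:
`F[μ] = ∫_0^∞ ∫_Ω [𝟙[s < c − L̃(ω)] − (∫_D 𝟙[s < min(f(ω,x),c) − L̃(ω)] dμ)^q] dP ds`,
where `L̃(ω) = min_{x ∈ D} min(f(ω,x), c)`. -/
theorem stmt2 {Ω : Type*} [MeasurableSpace Ω] (P : Measure Ω) [IsProbabilityMeasure P]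
    {d : ℕ} (D : Set (EuclideanSpace ℝ (Fin d))) (hD : IsCompact D) (hDne : D.Nonempty)
    (c : ℝ) (q : ℕ) (hq : 1 ≤ q)
    (f : Ω → EuclideanSpace ℝ (Fin d) → ℝ)
    (hf_meas : Measurable (Function.uncurry f))
    (C : ℝ) (hf_bdd : ∀ ω x, |f ω x| ≤ C)
    (hf_cont : ∀ ω, ContinuousOn (f ω) D)
    (μ : Measure (EuclideanSpace ℝ (Fin d))) [IsProbabilityMeasure μ] (hμD : μ D = 1)
    (Lt : Ω → ℝ) (hLt : ∀ ω, Lt ω = sInf ((fun x => min (f ω x) c) '' D)) :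
    batchEI P c q f μ
      = ∫ s in Set.Ioi (0:ℝ), (∫ ω,
          ((if s < c - Lt ω then (1:ℝ) else 0)
            - (∫ x in D, (if s < min (f ω x) c - Lt ω then (1:ℝ) else 0) ∂μ) ^ q) ∂P) := by
  classical
  have hq0 : 0 < q := hq
  haveI : Nonempty (Fin q) := ⟨⟨0, hq0⟩⟩
  set g : Ω → EuclideanSpace ℝ (Fin d) → ℝ := fun ω x => min (f ω x) c with hgdef
  set B : ℝ := |C| + |c| with hBdef
  have habsC : ∀ ω x, -C ≤ f ω x ∧ f ω x ≤ C := fun ω x => abs_le.mp (hf_bdd ω x)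
  have hcB : c ≤ B := by
    have := abs_nonneg C; have := le_abs_self c; simp only [hBdef]; linarith
  have hgB : ∀ ω x, -B ≤ g ω x ∧ g ω x ≤ B := by
    intro ω x
    obtain ⟨h1, h2⟩ := habsC ω x
    have hC1 : -|C| ≤ -C := by have := le_abs_self C; linarith
    have hc1 : -|c| ≤ c := neg_abs_le c
    have := abs_nonneg C; have := abs_nonneg c
    constructor
    · exact le_min (by simp only [hBdef]; linarith) (by simp only [hBdef]; linarith)
    · exact (min_le_right _ _).trans hcB
  have hg_meas : Measurable (Function.uncurry g) := hf_meas.min measurable_const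
  have hg_measω : ∀ ω, Measurable (g ω) := fun ω =>
    hg_meas.comp (measurable_prodMk_left)
  have hDmeas : MeasurableSet D := hD.isClosed.measurableSet
  have hμDc : μ Dᶜ = 0 := by
    rw [measure_compl hDmeas (measure_ne_top μ D), hμD, measure_univ, tsub_self]
  have hrestrict : μ.restrict D = μ :=
    Measure.restrict_eq_self_of_ae_mem (mem_ae_iff.mpr (by simpa using hμDc))
  -- basic properties of Lt
  have hbdd : ∀ ω, BddBelow (g ω '' D) := fun ω =>
    ⟨-B, by rintro y ⟨x, hx, rfl⟩; exact (hgB ω x).1⟩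
  have hLtle : ∀ ω, ∀ x ∈ D, Lt ω ≤ g ω x := fun ω x hx => by
    rw [hLt ω]; exact csInf_le (hbdd ω) ⟨x, hx, rfl⟩
  have hLtc : ∀ ω, Lt ω ≤ c := fun ω =>
    (hLtle ω _ hDne.some_mem).trans (min_le_right _ _)
  have hLtB : ∀ ω, -B ≤ Lt ω := fun ω => by
    rw [hLt ω]
    exact le_csInf (hDne.image _) (by rintro y ⟨x, hx, rfl⟩; exact (hgB ω x).1)
  set M : ℝ := c + B with hMdef
  have hcLtM : ∀ ω, c - Lt ω ≤ M := fun ω => by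
    have := hLtB ω; simp only [hMdef]; linarith
  -- measurability of Lt via countable dense subset
  obtain ⟨T, hTD, hTc, hTcl⟩ :=
    (TopologicalSpace.IsSeparable.of_separableSpace D).exists_countable_dense_subset
  have hTne : T.Nonempty := by
    rcases hDne with ⟨x, hx⟩
    rcases Set.eq_empty_or_nonempty T with h | h
    · exfalso; rw [h] at hTcl; simpa using hTcl hx
    · exact h
  obtain ⟨u, hu⟩ := hTc.exists_eq_range hTne
  have huD : ∀ n, u n ∈ D := fun n => hTD (hu ▸ Set.mem_range_self n)
  have hLt_iInf : ∀ ω, Lt ω = ⨅ n, g ω (u n) := by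
    intro ω
    apply le_antisymm
    · exact le_ciInf fun n => hLtle ω _ (huD n)
    · rw [hLt ω]
      apply le_csInf (hDne.image _)
      rintro y ⟨x, hx, rfl⟩
      obtain ⟨v, hvT, hvx⟩ := mem_closure_iff_seq_limit.mp (hTcl hx)
      have hgc : ContinuousWithinAt (g ω) D x :=
        ((hf_cont ω x hx).min continuousWithinAt_const)
      have h1 : Filter.Tendsto (fun k => g ω (v k)) Filter.atTop (nhds (g ω x)) := by
        apply hgc.tendsto.comp
        rw [tendsto_nhdsWithin_iff]
        exact ⟨hvx, Filter.Eventually.of_forall fun k => hTD (hvT k)⟩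
      refine ge_of_tendsto h1 (Filter.Eventually.of_forall fun k => ?_)
      obtain ⟨n, hn⟩ : ∃ n, u n = v k := by
        have := hvT k; rw [hu] at this; exact this
      calc ⨅ n, g ω (u n) ≤ g ω (u n) :=
            ciInf_le ⟨-B, by rintro y ⟨m, rfl⟩; exact (hgB ω (u m)).1⟩ n
        _ = g ω (v k) := by rw [hn]
  have hLt_meas : Measurable Lt := by
    have h : Lt = fun ω => ⨅ n, g ω (u n) := funext hLt_iInf
    rw [h]
    exact Measurable.iInf fun n =>
      hg_meas.comp (measurable_id.prodMk measurable_const)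
  -- the layer sets
  set A : Ω → ℝ → Set (EuclideanSpace ℝ (Fin d)) :=
    fun ω s => {y | s < g ω y - Lt ω} with hAdef
  have hAmeas : ∀ ω s, MeasurableSet (A ω s) := fun ω s =>
    measurableSet_lt measurable_const ((hg_measω ω).sub measurable_const)
  have hAempty : ∀ ω s, c - Lt ω ≤ s → A ω s = ∅ := by
    intro ω s hs
    ext y
    simp only [hAdef, Set.mem_setOf_eq, Set.mem_empty_iff_false, iff_false, not_lt]
    have : g ω y ≤ c := min_le_right _ _
    linarith
  -- the inner D-integral equals the measure of A
  have hφ2 : ∀ ω s, (∫ x in D, (if s < min (f ω x) c - Lt ω then (1:ℝ) else 0) ∂μ)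
      = (μ (A ω s)).toReal := by
    intro ω s
    rw [hrestrict]
    have h : (fun x => (if s < min (f ω x) c - Lt ω then (1:ℝ) else 0))
        = (A ω s).indicator (fun _ => (1:ℝ)) := by
      funext x; simp [hAdef, Set.indicator_apply, hgdef]
    rw [h, integral_indicator_const _ (hAmeas ω s), smul_eq_mul, mul_one, Measure.real_def]
  have hμA_le_one : ∀ ω s, (μ (A ω s)).toReal ≤ 1 := fun ω s =>
    ENNReal.toReal_le_of_le_ofReal zero_le_one (by simpa using prob_le_one (μ := μ) (s := A ω s))
  have hψle : ∀ ω s, ((μ (A ω s)).toReal) ^ q ≤ (if s < c - Lt ω then (1:ℝ) else 0) := by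
    intro ω s
    by_cases hs : s < c - Lt ω
    · rw [if_pos hs]
      exact pow_le_one₀ ENNReal.toReal_nonneg (hμA_le_one ω s)
    · rw [if_neg hs, hAempty ω s (not_lt.mp hs)]
      simp [zero_pow hq0.ne']
  -- integrability of the two s-functions
  have hφ1int : ∀ ω, Integrable (fun s => if s < c - Lt ω then (1:ℝ) else 0)
      (volume.restrict (Set.Ioi 0)) := by
    intro ω
    have h : (fun s : ℝ => if s < c - Lt ω then (1:ℝ) else 0)
        = (Set.Iio (c - Lt ω)).indicator (fun _ => (1:ℝ)) := by
      funext s; simp [Set.indicator_apply]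
    rw [h, integrable_indicator_iff measurableSet_Iio]
    apply (integrableOn_const_iff).mpr
    right
    rw [Measure.restrict_apply measurableSet_Iio, Set.Iio_inter_Ioi, Real.volume_Ioo]
    exact ENNReal.ofReal_lt_top
  have hφ2anti : ∀ ω, Antitone (fun s => ((μ (A ω s)).toReal) ^ q) := by
    intro ω s t hst
    apply pow_le_pow_left₀ ENNReal.toReal_nonneg
    apply ENNReal.toReal_mono (measure_ne_top μ _)
    exact measure_mono fun y hy => lt_of_le_of_lt hst hy
  have hφ2int : ∀ ω, Integrable (fun s => ((μ (A ω s)).toReal) ^ q)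
      (volume.restrict (Set.Ioi 0)) := by
    intro ω
    refine (hφ1int ω).mono' ((hφ2anti ω).measurable).aestronglyMeasurable ?_
    refine Filter.Eventually.of_forall fun s => ?_
    rw [Real.norm_eq_abs, abs_of_nonneg (by positivity)]
    exact hψle ω s
  -- inner integral computation, for each fixed ω
  have hinner : ∀ ω, (∫ x : Fin q → EuclideanSpace ℝ (Fin d),
        max 0 (c - ⨅ i, f ω (x i)) ∂(Measure.pi fun _ => μ))
      = ∫ s in Set.Ioi (0:ℝ),
          ((if s < c - Lt ω then (1:ℝ) else 0) - ((μ (A ω s)).toReal) ^ q) := by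
    intro ω
    set ν : Measure (Fin q → EuclideanSpace ℝ (Fin d)) := Measure.pi fun _ => μ with hνdef
    haveI : IsProbabilityMeasure ν := by
      constructor
      rw [hνdef, ← Set.pi_univ Set.univ, Measure.pi_pi]
      simp
    have hmin : ∀ x : Fin q → EuclideanSpace ℝ (Fin d),
        max 0 (c - ⨅ i, f ω (x i)) = (c - Lt ω) - ((⨅ i, g ω (x i)) - Lt ω) := by
      intro x
      have h1 : min (⨅ i, f ω (x i)) c = ⨅ i, g ω (x i) :=
        Monotone.map_ciInf_of_continuousAt
          ((continuous_id.min continuous_const).continuousAt)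
          (fun a b hab => min_le_min hab le_rfl) (Set.finite_range _).bddBelow
      rw [max_sub_min_eq, h1]; ring
    have hYmeas : Measurable (fun x : Fin q → EuclideanSpace ℝ (Fin d) =>
        (⨅ i, g ω (x i)) - Lt ω) :=
      (Measurable.iInf fun i => (hg_measω ω).comp (measurable_pi_apply i)).sub measurable_const
    have hYbdd : ∀ x : Fin q → EuclideanSpace ℝ (Fin d),
        ‖(⨅ i, g ω (x i)) - Lt ω‖ ≤ B + B := by
      intro x
      have h1 : ⨅ i, g ω (x i) ≤ B :=
        (ciInf_le (Set.finite_range _).bddBelow (Classical.arbitrary (Fin q))).trans (hgB ω _).2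
      have h2 : -B ≤ ⨅ i, g ω (x i) := le_ciInf fun i => (hgB ω _).1
      have h3 := hLtB ω; have h4 := hLtc ω
      rw [Real.norm_eq_abs, abs_le]
      constructor <;> linarith
    have hYint : Integrable (fun x => (⨅ i, g ω (x i)) - Lt ω) ν :=
      (integrable_const (B + B)).mono' hYmeas.aestronglyMeasurable
        (Filter.Eventually.of_forall hYbdd)
    have hYnn : 0 ≤ᵐ[ν] fun x => (⨅ i, g ω (x i)) - Lt ω := by
      have hSmeas : MeasurableSet {x : Fin q → EuclideanSpace ℝ (Fin d) | ∀ i, x i ∈ D} := by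
        have : {x : Fin q → EuclideanSpace ℝ (Fin d) | ∀ i, x i ∈ D}
            = Set.pi Set.univ (fun _ => D) := by ext x; simp [Set.mem_pi]
        rw [this]; exact MeasurableSet.univ_pi fun _ => hDmeas
      have hS1 : ν {x : Fin q → EuclideanSpace ℝ (Fin d) | ∀ i, x i ∈ D} = 1 := by
        have h : {x : Fin q → EuclideanSpace ℝ (Fin d) | ∀ i, x i ∈ D}
            = Set.pi Set.univ (fun _ => D) := by ext x; simp [Set.mem_pi]
        rw [h, hνdef, Measure.pi_pi]
        simp [hμD]
      have hSc : ν {x : Fin q → EuclideanSpace ℝ (Fin d) | ∀ i, x i ∈ D}ᶜ = 0 := by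
        rw [measure_compl hSmeas (measure_ne_top ν _), hS1, measure_univ, tsub_self]
      refine Filter.eventually_of_mem (mem_ae_iff.mpr hSc) ?_
      intro x hx
      simp only [Set.mem_setOf_eq] at hx
      have : Lt ω ≤ ⨅ i, g ω (x i) := le_ciInf fun i => hLtle ω _ (hx i)
      simpa [Pi.zero_apply] using sub_nonneg.mpr this
    have hlayer := hYint.integral_eq_integral_meas_lt hYnn
    have hset : ∀ s : ℝ, {x : Fin q → EuclideanSpace ℝ (Fin d) |
        s < (⨅ i, g ω (x i)) - Lt ω} = Set.pi Set.univ (fun _ => A ω s) := by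
      intro s
      ext x
      simp only [Set.mem_setOf_eq, Set.mem_pi, Set.mem_univ, forall_true_left, hAdef]
      rw [lt_sub_iff_add_lt, lt_iInf_fin]
      exact forall_congr' fun i => (lt_sub_iff_add_lt).symm
    have hYint_eq : ∫ x, ((⨅ i, g ω (x i)) - Lt ω) ∂ν
        = ∫ s in Set.Ioi (0:ℝ), ((μ (A ω s)).toReal) ^ q := by
      rw [hlayer]
      apply integral_congr_ae (Filter.Eventually.of_forall fun s => ?_)
      rw [hset s, hνdef, Measure.real_def, Measure.pi_pi, Finset.prod_const]
      simp [ENNReal.toReal_pow]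
    calc (∫ x : Fin q → EuclideanSpace ℝ (Fin d),
          max 0 (c - ⨅ i, f ω (x i)) ∂ν)
        = ∫ x, ((c - Lt ω) - ((⨅ i, g ω (x i)) - Lt ω)) ∂ν :=
          integral_congr_ae (Filter.Eventually.of_forall fun x => hmin x)
      _ = (c - Lt ω) - ∫ x, ((⨅ i, g ω (x i)) - Lt ω) ∂ν := by
          rw [integral_sub (integrable_const _) hYint, integral_const]
          simp
      _ = (∫ s in Set.Ioi (0:ℝ), (if s < c - Lt ω then (1:ℝ) else 0))
          - ∫ s in Set.Ioi (0:ℝ), ((μ (A ω s)).toReal) ^ q := by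
          rw [hYint_eq, indicator_integral_Ioi _ (by linarith [hLtc ω])]
      _ = ∫ s in Set.Ioi (0:ℝ),
          ((if s < c - Lt ω then (1:ℝ) else 0) - ((μ (A ω s)).toReal) ^ q) :=
          (integral_sub (hφ1int ω) (hφ2int ω)).symm
  -- ψ and its vanishing / measurability / integrability over the product
  set ψ : Ω → ℝ → ℝ := fun ω s =>
    (if s < c - Lt ω then (1:ℝ) else 0) - ((μ (A ω s)).toReal) ^ q with hψdef
  have hψzero : ∀ ω s, M < s → ψ ω s = 0 := by
    intro ω s hs
    have h1 : c - Lt ω ≤ s := (hcLtM ω).trans hs.le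
    simp only [hψdef]
    rw [if_neg (not_lt.mpr h1), hAempty ω s h1]
    simp [zero_pow hq0.ne']
  have hψ_indicator : ∀ ω, (fun s => ψ ω s) = (Set.Iic M).indicator (fun s => ψ ω s) := by
    intro ω
    funext s
    rcases le_or_gt s M with h | h
    · rw [Set.indicator_of_mem (Set.mem_Iic.mpr h)]
    · rw [Set.indicator_of_notMem (by simpa using h), hψzero ω s h]
  have hψmeas : Measurable (fun p : Ω × ℝ => ψ p.1 p.2) := by
    have h1 : Measurable (fun p : Ω × ℝ => if p.2 < c - Lt p.1 then (1:ℝ) else 0) := by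
      apply Measurable.ite _ measurable_const measurable_const
      exact measurableSet_lt measurable_snd (measurable_const.sub (hLt_meas.comp measurable_fst))
    have h2 : Measurable (fun p : Ω × ℝ => μ (A p.1 p.2)) := by
      have heq : (fun p : Ω × ℝ => μ (A p.1 p.2))
          = fun p => ∫⁻ y, (A p.1 p.2).indicator (fun _ => (1:ENNReal)) y ∂μ := by
        funext p
        rw [lintegral_indicator_const (hAmeas p.1 p.2), one_mul]
      rw [heq]
      apply Measurable.lintegral_prod_right
      have : (Function.uncurry fun (p : Ω × ℝ) y => (A p.1 p.2).indicator (fun _ => (1:ENNReal)) y)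
          = fun z : (Ω × ℝ) × EuclideanSpace ℝ (Fin d) =>
            if z.1.2 < g z.1.1 z.2 - Lt z.1.1 then (1:ENNReal) else 0 := by
        funext z
        simp [Function.uncurry, hAdef, Set.indicator_apply]
      rw [this]
      apply Measurable.ite _ measurable_const measurable_const
      apply measurableSet_lt (measurable_snd.comp measurable_fst)
      have hguncurry : Measurable (fun z : (Ω × ℝ) × EuclideanSpace ℝ (Fin d) =>
          g z.1.1 z.2) :=
        hg_meas.comp ((measurable_fst.comp measurable_fst).prodMk measurable_snd)
      exact hguncurry.sub ((hLt_meas.comp (measurable_fst.comp measurable_fst)))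
    exact h1.sub ((h2.ennreal_toReal).pow measurable_const)
  have hψbdd : ∀ ω s, ‖ψ ω s‖ ≤ 1 := by
    intro ω s
    have h1 : 0 ≤ ((μ (A ω s)).toReal) ^ q := by positivity
    have h2 : ((μ (A ω s)).toReal) ^ q ≤ 1 :=
      pow_le_one₀ ENNReal.toReal_nonneg (hμA_le_one ω s)
    simp only [hψdef, Real.norm_eq_abs, abs_le]
    have h0 : (0:ℝ) ≤ (if s < c - Lt ω then (1:ℝ) else 0) := by split <;> norm_num
    have h1' : (if s < c - Lt ω then (1:ℝ) else 0) ≤ 1 := by split <;> norm_num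
    constructor <;> linarith
  haveI : IsFiniteMeasure (volume.restrict (Set.Ioc (0:ℝ) M)) := by
    constructor
    rw [Measure.restrict_apply MeasurableSet.univ, Set.univ_inter, Real.volume_Ioc]
    exact ENNReal.ofReal_lt_top
  have hψprodint : Integrable (fun p : Ω × ℝ => ψ p.1 p.2)
      (P.prod (volume.restrict (Set.Ioc (0:ℝ) M))) :=
    (integrable_const 1).mono' hψmeas.aestronglyMeasurable
      (Filter.Eventually.of_forall fun p => hψbdd p.1 p.2)
  -- restrict the s-domain to Ioc 0 M (in each inner integral)
  have hIoc : ∀ ω, (∫ s in Set.Ioi (0:ℝ), ψ ω s) = ∫ s in Set.Ioc (0:ℝ) M, ψ ω s := by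
    intro ω
    conv_lhs => rw [hψ_indicator ω]
    rw [setIntegral_indicator measurableSet_Iic, Set.Ioi_inter_Iic]
  -- Fubini
  have hswap : (∫ ω, ∫ s in Set.Ioc (0:ℝ) M, ψ ω s ∂volume ∂P)
      = ∫ s in Set.Ioc (0:ℝ) M, ∫ ω, ψ ω s ∂P ∂volume :=
    integral_integral_swap hψprodint
  -- vanishing of the outer integrand beyond M
  have hΦzero : ∀ s, M < s → (∫ ω, ψ ω s ∂P) = 0 := by
    intro s hs
    rw [integral_congr_ae (Filter.Eventually.of_forall fun ω => hψzero ω s hs)]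
    simp
  have hΦ_indicator : (fun s => ∫ ω, ψ ω s ∂P)
      = (Set.Iic M).indicator (fun s => ∫ ω, ψ ω s ∂P) := by
    funext s
    rcases le_or_gt s M with h | h
    · rw [Set.indicator_of_mem (Set.mem_Iic.mpr h)]
    · rw [Set.indicator_of_notMem (by simpa using h), hΦzero s h]
  have hIocΦ : (∫ s in Set.Ioi (0:ℝ), ∫ ω, ψ ω s ∂P)
      = ∫ s in Set.Ioc (0:ℝ) M, ∫ ω, ψ ω s ∂P := by
    conv_lhs => rw [hΦ_indicator]
    rw [setIntegral_indicator measurableSet_Iic, Set.Ioi_inter_Iic]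
  -- putting everything together
  calc batchEI P c q f μ
      = ∫ ω, ∫ s in Set.Ioi (0:ℝ), ψ ω s ∂volume ∂P := by
        unfold batchEI
        exact integral_congr_ae (Filter.Eventually.of_forall fun ω => hinner ω)
    _ = ∫ ω, ∫ s in Set.Ioc (0:ℝ) M, ψ ω s ∂volume ∂P :=
        integral_congr_ae (Filter.Eventually.of_forall fun ω => hIoc ω)
    _ = ∫ s in Set.Ioc (0:ℝ) M, ∫ ω, ψ ω s ∂P ∂volume := hswap
    _ = ∫ s in Set.Ioi (0:ℝ), ∫ ω, ψ ω s ∂P ∂volume := hIocΦ.symm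
    _ = ∫ s in Set.Ioi (0:ℝ), (∫ ω,
          ((if s < c - Lt ω then (1:ℝ) else 0)
            - (∫ x in D, (if s < min (f ω x) c - Lt ω then (1:ℝ) else 0) ∂μ) ^ q) ∂P) := by
        apply integral_congr_ae (Filter.Eventually.of_forall fun s => ?_)
        apply integral_congr_ae (Filter.Eventually.of_forall fun ω => ?_)
        simp only [hψdef]
        rw [hφ2 ω s]
end

section
/- For every α > 0, the regularised acquisition functional L_α[ρ] := F[ρ] + α Reg[ρ] is strictly concave on bounded compactly supported probability densities: if ρ₀, ρ₁ are bounded measurable probability densities supported in D with ρ₀ ≠ ρ₁ on a set of positive Lebesgue measure and λ ∈ (0,1), then, writing ρ_λ = λρ₁ + (1−λ)ρ₀ and q > 1, L_α[ρ_λ] > λ L_α[ρ₁] + (1−λ) L_α[ρ₀]. -/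
open MeasureTheory

/-- The batch expected improvement functional evaluated on a probability density `ρ`,
i.e. on the measure `ρ dx`. -/
noncomputable def batchEIDens {Ω : Type*} [MeasurableSpace Ω] (P : Measure Ω)
    {d : ℕ} (c : ℝ) (q : ℕ) (f : Ω → EuclideanSpace ℝ (Fin d) → ℝ)
    (ρ : EuclideanSpace ℝ (Fin d) → ℝ) : ℝ :=
  batchEI P c q f (volume.withDensity fun x => ENNReal.ofReal (ρ x))

/-- The negative differential entropy regulariser `Reg[ρ] = −∫ ρ log ρ`. -/
noncomputable def Reg {d : ℕ} (ρ : EuclideanSpace ℝ (Fin d) → ℝ) : ℝ :=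
  - ∫ x, ρ x * Real.log (ρ x)

open Set


/-- Layer-cake representation for the inner batch-EI integral. -/
lemma layer_rep {α : Type*} [MeasurableSpace α] (q : ℕ) (hq : 0 < q) (c C : ℝ)
    (h : α → ℝ) (hm : Measurable h) (hb : ∀ y, |h y| ≤ C)
    (μ : Measure α) [IsProbabilityMeasure μ] :
    ∫ x : Fin q → α, max 0 (c - ⨅ i, h (x i)) ∂(Measure.pi fun _ => μ)
      = ∫ t in Set.Ioi (0:ℝ), (1 - ((μ {y | c - t ≤ h y}).toReal) ^ q) := by
  haveI : Nonempty (Fin q) := ⟨⟨0, hq⟩⟩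
  set g : (Fin q → α) → ℝ := fun x => max 0 (c - ⨅ i, h (x i)) with hgdef
  have hmg : Measurable g :=
    measurable_const.max (measurable_const.sub
      (Measurable.iInf fun i => hm.comp (measurable_pi_apply i)))
  have hgb : ∀ x, g x ≤ max 0 (c + C) := by
    intro x
    apply max_le_max le_rfl
    have : (-C : ℝ) ≤ ⨅ i, h (x i) := le_ciInf fun i => (abs_le.1 (hb (x i))).1
    linarith
  have hg0 : ∀ x, 0 ≤ g x := fun x => le_max_left _ _
  have hint : Integrable g (Measure.pi fun _ : Fin q => μ) :=
    ⟨hmg.aestronglyMeasurable, HasFiniteIntegral.of_bounded (C := max 0 (c + C))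
      (ae_of_all _ fun x => by
        rw [Real.norm_eq_abs, abs_of_nonneg (hg0 x)]; exact hgb x)⟩
  rw [hint.integral_eq_integral_meas_lt (ae_of_all _ hg0)]
  apply setIntegral_congr_fun measurableSet_Ioi
  intro t ht
  show ((Measure.pi fun _ : Fin q => μ) {x | t < g x}).toReal
      = 1 - ((μ {y | c - t ≤ h y}).toReal) ^ q
  have hSm : MeasurableSet {y | c - t ≤ h y} := measurableSet_le measurable_const hm
  have hset : {x : Fin q → α | t < g x}
      = (Set.pi Set.univ fun _ : Fin q => {y | c - t ≤ h y})ᶜ := by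
    ext x
    simp only [Set.mem_setOf_eq, Set.mem_compl_iff, Set.mem_pi, Set.mem_univ,
      forall_true_left]
    constructor
    · intro hlt hall
      have h1 : c - t ≤ ⨅ i, h (x i) := le_ciInf fun i => hall i
      have h2 : g x ≤ t := max_le (le_of_lt ht) (by linarith)
      exact absurd hlt (not_lt.2 h2)
    · intro hex
      push_neg at hex
      obtain ⟨i, hi⟩ := hex
      have hbdd : BddBelow (Set.range fun i => h (x i)) :=
        Set.Finite.bddBelow (Set.finite_range _)
      have h1 : (⨅ j, h (x j)) ≤ h (x i) := ciInf_le hbdd i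
      have h2 : t < c - ⨅ j, h (x j) := by linarith
      exact lt_max_of_lt_right h2
  rw [hset, prob_compl_eq_one_sub (MeasurableSet.univ_pi fun _ => hSm), Measure.pi_pi]
  simp only [Finset.prod_const, Finset.card_univ, Fintype.card_fin]
  rw [ENNReal.toReal_sub_of_le (pow_le_one' prob_le_one q) ENNReal.one_ne_top,
    ENNReal.toReal_pow, ENNReal.toReal_one]

/-- Integrability of the layer-cake integrand. -/
lemma aux_G_int {α : Type*} [MeasurableSpace α] (q : ℕ) (c C : ℝ)
    (h : α → ℝ) (hm : Measurable h) (hb : ∀ y, |h y| ≤ C)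
    (μ : Measure α) [IsProbabilityMeasure μ] :
    IntegrableOn (fun t : ℝ => 1 - ((μ {y | c - t ≤ h y}).toReal) ^ q)
      (Set.Ioi 0) volume := by
  set s : ℝ → ℝ := fun t => (μ {y | c - t ≤ h y}).toReal with hsdef
  have hs_mono : Monotone s := by
    intro t t' htt'
    refine ENNReal.toReal_mono (measure_ne_top _ _) (measure_mono fun y hy => ?_)
    simp only [Set.mem_setOf_eq] at hy ⊢
    linarith
  have hGm : Measurable fun t => 1 - s t ^ q :=
    measurable_const.sub (hs_mono.measurable.pow_const q)
  have hs01 : ∀ t, 0 ≤ s t ∧ s t ≤ 1 := fun t =>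
    ⟨ENNReal.toReal_nonneg, by
      rw [← ENNReal.toReal_one]
      exact ENNReal.toReal_mono ENNReal.one_ne_top prob_le_one⟩
  have hGzero : ∀ t ∈ Set.Ioi (max 0 (c + C)), (1 - s t ^ q) = 0 := by
    intro t ht
    have huniv : {y | c - t ≤ h y} = Set.univ := by
      ext y
      simp only [Set.mem_setOf_eq, Set.mem_univ, iff_true]
      have h1 : -C ≤ h y := (abs_le.1 (hb y)).1
      have h2 : c + C ≤ t := le_of_lt (lt_of_le_of_lt (le_max_right 0 (c + C)) ht)
      linarith
    have hs1 : s t = 1 := by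
      simp only [hsdef, huniv, measure_univ, ENNReal.toReal_one]
    rw [hs1, one_pow, sub_self]
  have hunion : Set.Ioc (0:ℝ) (max 0 (c + C)) ∪ Set.Ioi (max 0 (c + C)) = Set.Ioi 0 :=
    Set.Ioc_union_Ioi_eq_Ioi (le_max_left _ _)
  rw [← hunion]
  apply IntegrableOn.union
  · apply Measure.integrableOn_of_bounded (M := 1)
    · rw [Real.volume_Ioc]; exact ENNReal.ofReal_ne_top
    · exact hGm.aestronglyMeasurable
    · refine ae_of_all _ fun t => ?_
      rw [Real.norm_eq_abs, abs_le]
      constructor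
      · nlinarith [(hs01 t).1, (hs01 t).2, pow_le_one₀ (n := q) (hs01 t).1 (hs01 t).2]
      · nlinarith [pow_nonneg (hs01 t).1 q]
  · exact (integrableOn_zero (ε' := ℝ)).congr_fun
      (fun t ht => (hGzero t ht).symm) measurableSet_Ioi

open MeasureTheory Set

lemma inner_key {α : Type*} [MeasurableSpace α] (q : ℕ) (hq : 0 < q) (c C : ℝ)
    (h : α → ℝ) (hm : Measurable h) (hb : ∀ y, |h y| ≤ C)
    (μ₀ μ₁ μl : Measure α) [IsProbabilityMeasure μ₀] [IsProbabilityMeasure μ₁]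
    [IsProbabilityMeasure μl]
    (lam : ℝ) (hl0 : 0 < lam) (hl1 : lam < 1)
    (hmix : ∀ s : Set α, MeasurableSet s →
      μl s = ENNReal.ofReal lam * μ₁ s + ENNReal.ofReal (1 - lam) * μ₀ s) :
    lam * (∫ x : Fin q → α, max 0 (c - ⨅ i, h (x i)) ∂(Measure.pi fun _ => μ₁))
      + (1 - lam) * (∫ x : Fin q → α, max 0 (c - ⨅ i, h (x i)) ∂(Measure.pi fun _ => μ₀))
    ≤ ∫ x : Fin q → α, max 0 (c - ⨅ i, h (x i)) ∂(Measure.pi fun _ => μl) := by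
  have hSm : ∀ t : ℝ, MeasurableSet {y | c - t ≤ h y} :=
    fun t => measurableSet_le measurable_const hm
  -- the three layer-cake integrands
  set s0 : ℝ → ℝ := fun t => (μ₀ {y | c - t ≤ h y}).toReal with hs0
  set s1 : ℝ → ℝ := fun t => (μ₁ {y | c - t ≤ h y}).toReal with hs1
  have hs01 : ∀ t, 0 ≤ s0 t ∧ s0 t ≤ 1 := fun t =>
    ⟨ENNReal.toReal_nonneg, by
      rw [hs0, ← ENNReal.toReal_one]
      exact ENNReal.toReal_mono ENNReal.one_ne_top prob_le_one⟩
  have hs11 : ∀ t, 0 ≤ s1 t ∧ s1 t ≤ 1 := fun t =>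
    ⟨ENNReal.toReal_nonneg, by
      rw [hs1, ← ENNReal.toReal_one]
      exact ENNReal.toReal_mono ENNReal.one_ne_top prob_le_one⟩
  have hslam : ∀ t : ℝ, (μl {y | c - t ≤ h y}).toReal = lam * s1 t + (1 - lam) * s0 t := by
    intro t
    rw [hmix _ (hSm t), ENNReal.toReal_add
        (ENNReal.mul_ne_top ENNReal.ofReal_ne_top (measure_ne_top _ _))
        (ENNReal.mul_ne_top ENNReal.ofReal_ne_top (measure_ne_top _ _)),
      ENNReal.toReal_mul, ENNReal.toReal_mul,
      ENNReal.toReal_ofReal hl0.le, ENNReal.toReal_ofReal (by linarith : (0:ℝ) ≤ 1 - lam)]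
  rw [layer_rep q hq c C h hm hb μ₀, layer_rep q hq c C h hm hb μ₁,
    layer_rep q hq c C h hm hb μl]
  have hint0 := aux_G_int q c C h hm hb μ₀
  have hint1 := aux_G_int q c C h hm hb μ₁
  have hintl := aux_G_int q c C h hm hb μl
  rw [← integral_const_mul, ← integral_const_mul,
    ← integral_add (hint1.const_mul lam) (hint0.const_mul (1 - lam))]
  apply setIntegral_mono_on ((hint1.const_mul lam).add (hint0.const_mul (1 - lam)))
    hintl measurableSet_Ioi
  intro t ht
  show lam * (1 - s1 t ^ q) + (1 - lam) * (1 - s0 t ^ q)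
      ≤ 1 - (μl {y | c - t ≤ h y}).toReal ^ q
  rw [hslam t]
  have hconv := (convexOn_pow (𝕜 := ℝ) q).2 (Set.mem_Ici.2 (hs11 t).1)
    (Set.mem_Ici.2 (hs01 t).1) hl0.le (by linarith : (0:ℝ) ≤ 1 - lam) (by ring)
  simp only [smul_eq_mul] at hconv
  linarith
lemma outer_int {Ω : Type*} [MeasurableSpace Ω] (P : Measure Ω) [IsProbabilityMeasure P]
    {α : Type*} [MeasurableSpace α] (q : ℕ) (hq : 0 < q) (c C : ℝ) (f : Ω → α → ℝ)
    (hf : Measurable (Function.uncurry f)) (hb : ∀ ω x, |f ω x| ≤ C)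
    (μ : Measure α) [IsProbabilityMeasure μ] :
    Integrable (fun ω => ∫ x : Fin q → α,
      max 0 (c - ⨅ i, f ω (x i)) ∂(Measure.pi fun _ => μ)) P := by
  haveI : Nonempty (Fin q) := ⟨⟨0, hq⟩⟩
  have hg : Measurable fun p : Ω × (Fin q → α) => max 0 (c - ⨅ i, f p.1 (p.2 i)) :=
    measurable_const.max (measurable_const.sub (Measurable.iInf fun i =>
      hf.comp (measurable_fst.prodMk ((measurable_pi_apply i).comp measurable_snd))))
  have hsm := (hg.stronglyMeasurable.integral_prod_right'
    (ν := Measure.pi fun _ : Fin q => μ))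
  refine ⟨hsm.aestronglyMeasurable, HasFiniteIntegral.of_bounded
    (C := max 0 (c + C)) (ae_of_all _ fun ω => ?_)⟩
  have hbound : ∀ x : Fin q → α, ‖max 0 (c - ⨅ i, f ω (x i))‖ ≤ max 0 (c + C) := by
    intro x
    rw [Real.norm_eq_abs, abs_of_nonneg (le_max_left _ _)]
    apply max_le_max le_rfl
    have : (-C : ℝ) ≤ ⨅ i, f ω (x i) := le_ciInf fun i => (abs_le.1 (hb ω (x i))).1
    linarith
  calc ‖∫ x : Fin q → α, max 0 (c - ⨅ i, f ω (x i)) ∂(Measure.pi fun _ => μ)‖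
      ≤ max 0 (c + C) * ((Measure.pi fun _ : Fin q => μ) Set.univ).toReal :=
        norm_integral_le_of_norm_le_const (ae_of_all _ hbound)
    _ = max 0 (c + C) := by rw [measure_univ, ENNReal.toReal_one, mul_one]

lemma F_concave {Ω : Type*} [MeasurableSpace Ω] (P : Measure Ω) [IsProbabilityMeasure P]
    {α : Type*} [MeasurableSpace α] (q : ℕ) (hq : 0 < q) (c C : ℝ) (f : Ω → α → ℝ)
    (hf : Measurable (Function.uncurry f)) (hb : ∀ ω x, |f ω x| ≤ C)
    (μ₀ μ₁ μl : Measure α) [IsProbabilityMeasure μ₀] [IsProbabilityMeasure μ₁]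
    [IsProbabilityMeasure μl]
    (lam : ℝ) (hl0 : 0 < lam) (hl1 : lam < 1)
    (hmix : ∀ s : Set α, MeasurableSet s →
      μl s = ENNReal.ofReal lam * μ₁ s + ENNReal.ofReal (1 - lam) * μ₀ s) :
    lam * (∫ ω, (∫ x : Fin q → α,
          max 0 (c - ⨅ i, f ω (x i)) ∂(Measure.pi fun _ => μ₁)) ∂P)
      + (1 - lam) * (∫ ω, (∫ x : Fin q → α,
          max 0 (c - ⨅ i, f ω (x i)) ∂(Measure.pi fun _ => μ₀)) ∂P)
    ≤ ∫ ω, (∫ x : Fin q → α,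
          max 0 (c - ⨅ i, f ω (x i)) ∂(Measure.pi fun _ => μl)) ∂P := by
  have h0 := outer_int P q hq c C f hf hb μ₀
  have h1 := outer_int P q hq c C f hf hb μ₁
  have hl := outer_int P q hq c C f hf hb μl
  have key : ∀ ω,
      lam * (∫ x : Fin q → α, max 0 (c - ⨅ i, f ω (x i)) ∂(Measure.pi fun _ => μ₁))
        + (1 - lam) * (∫ x : Fin q → α, max 0 (c - ⨅ i, f ω (x i)) ∂(Measure.pi fun _ => μ₀))
      ≤ ∫ x : Fin q → α, max 0 (c - ⨅ i, f ω (x i)) ∂(Measure.pi fun _ => μl) :=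
    fun ω => inner_key q hq c C (f ω) hf.of_uncurry_left (hb ω) μ₀ μ₁ μl lam hl0 hl1 hmix
  rw [← integral_const_mul, ← integral_const_mul,
    ← integral_add (h1.const_mul lam) (h0.const_mul (1 - lam))]
  exact integral_mono ((h1.const_mul lam).add (h0.const_mul (1 - lam))) hl key

lemma integrable_of_bdd_supp {d : ℕ} {D : Set (EuclideanSpace ℝ (Fin d))} (hD : IsCompact D)
    {g : EuclideanSpace ℝ (Fin d) → ℝ} (hg : Measurable g) {K : ℝ}
    (hbd : ∀ x, |g x| ≤ K) (hs : ∀ x ∉ D, g x = 0) : Integrable g := by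
  have hDm : MeasurableSet D := hD.isClosed.measurableSet
  have heq : g = D.indicator g := by
    funext x; by_cases hx : x ∈ D
    · rw [Set.indicator_of_mem hx]
    · rw [Set.indicator_of_notMem hx, hs x hx]
  rw [heq]
  refine (Measure.integrableOn_of_bounded (M := K) hD.measure_lt_top.ne
    hg.aestronglyMeasurable (ae_of_all _ fun x => ?_)).integrable_indicator hDm
  rw [Real.norm_eq_abs]; exact hbd x


/-- For every `α > 0` and `q > 1`, the regularised acquisition functional
`L_α[ρ] = F[ρ] + α Reg[ρ]` is strictly concave on bounded probability densities
supported in the compact set `D`. -/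
theorem stmt5 {Ω : Type*} [MeasurableSpace Ω] (P : Measure Ω) [IsProbabilityMeasure P]
    {d : ℕ} (D : Set (EuclideanSpace ℝ (Fin d))) (hD : IsCompact D) (hDne : D.Nonempty)
    (c : ℝ) (q : ℕ) (hq : 1 < q)
    (f : Ω → EuclideanSpace ℝ (Fin d) → ℝ)
    (hf_meas : Measurable (Function.uncurry f))
    (C : ℝ) (hf_bdd : ∀ ω x, |f ω x| ≤ C)
    (hf_cont : ∀ ω, ContinuousOn (f ω) D)
    (α : ℝ) (hα : 0 < α)
    (ρ₀ ρ₁ : EuclideanSpace ℝ (Fin d) → ℝ)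
    (h₀m : Measurable ρ₀) (h₁m : Measurable ρ₁)
    (h₀b : ∃ C', ∀ x, ρ₀ x ≤ C') (h₁b : ∃ C', ∀ x, ρ₁ x ≤ C')
    (h₀0 : ∀ x, 0 ≤ ρ₀ x) (h₁0 : ∀ x, 0 ≤ ρ₁ x)
    (h₀1 : (∫ x, ρ₀ x) = 1) (h₁1 : (∫ x, ρ₁ x) = 1)
    (h₀s : ∀ x ∉ D, ρ₀ x = 0) (h₁s : ∀ x ∉ D, ρ₁ x = 0)
    (hne : 0 < volume {x | ρ₀ x ≠ ρ₁ x})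
    (lam : ℝ) (hlam : lam ∈ Set.Ioo (0:ℝ) 1) :
    batchEIDens P c q f (fun x => lam * ρ₁ x + (1 - lam) * ρ₀ x)
        + α * Reg (fun x => lam * ρ₁ x + (1 - lam) * ρ₀ x)
      > lam * (batchEIDens P c q f ρ₁ + α * Reg ρ₁)
        + (1 - lam) * (batchEIDens P c q f ρ₀ + α * Reg ρ₀) := by
  obtain ⟨hl0, hl1⟩ := hlam
  obtain ⟨C₀', hC₀'⟩ := h₀b
  obtain ⟨C₁', hC₁'⟩ := h₁b
  have hl1' : (0:ℝ) < 1 - lam := by linarith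
  set ρl : EuclideanSpace ℝ (Fin d) → ℝ := fun x => lam * ρ₁ x + (1 - lam) * ρ₀ x with hρl
  have hlm : Measurable ρl := (h₁m.const_mul lam).add (h₀m.const_mul (1 - lam))
  have hl0' : ∀ x, 0 ≤ ρl x := fun x =>
    add_nonneg (mul_nonneg hl0.le (h₁0 x)) (mul_nonneg hl1'.le (h₀0 x))
  have hC₀0 : 0 ≤ C₀' := le_trans (h₀0 0) (hC₀' 0)
  have hC₁0 : 0 ≤ C₁' := le_trans (h₁0 0) (hC₁' 0)
  set Cm : ℝ := max C₀' C₁' with hCm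
  have h₀Cm : ∀ x, ρ₀ x ≤ Cm := fun x => le_trans (hC₀' x) (le_max_left _ _)
  have h₁Cm : ∀ x, ρ₁ x ≤ Cm := fun x => le_trans (hC₁' x) (le_max_right _ _)
  have hlCm : ∀ x, ρl x ≤ Cm := fun x => by
    have h1 := h₁Cm x; have h0 := h₀Cm x
    have : ρl x = lam * ρ₁ x + (1 - lam) * ρ₀ x := rfl
    nlinarith
  have hls : ∀ x ∉ D, ρl x = 0 := fun x hx => by
    show lam * ρ₁ x + (1 - lam) * ρ₀ x = 0
    rw [h₀s x hx, h₁s x hx]; ring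
  -- integrability of the densities
  have hint0 : Integrable ρ₀ := integrable_of_bdd_supp hD h₀m
    (fun x => by rw [abs_of_nonneg (h₀0 x)]; exact hC₀' x) h₀s
  have hint1 : Integrable ρ₁ := integrable_of_bdd_supp hD h₁m
    (fun x => by rw [abs_of_nonneg (h₁0 x)]; exact hC₁' x) h₁s
  -- the measures
  set μ0 := volume.withDensity fun x => ENNReal.ofReal (ρ₀ x) with hμ0
  set μ1 := volume.withDensity fun x => ENNReal.ofReal (ρ₁ x) with hμ1
  set μl := volume.withDensity fun x => ENNReal.ofReal (ρl x) with hμl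
  haveI hP0 : IsProbabilityMeasure μ0 := by
    constructor
    rw [hμ0, withDensity_apply _ MeasurableSet.univ, Measure.restrict_univ,
      ← ofReal_integral_eq_lintegral_ofReal hint0 (ae_of_all _ h₀0), h₀1, ENNReal.ofReal_one]
  haveI hP1 : IsProbabilityMeasure μ1 := by
    constructor
    rw [hμ1, withDensity_apply _ MeasurableSet.univ, Measure.restrict_univ,
      ← ofReal_integral_eq_lintegral_ofReal hint1 (ae_of_all _ h₁0), h₁1, ENNReal.ofReal_one]
  have hmix : ∀ s : Set (EuclideanSpace ℝ (Fin d)), MeasurableSet s →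
      μl s = ENNReal.ofReal lam * μ1 s + ENNReal.ofReal (1 - lam) * μ0 s := by
    intro s hs
    rw [hμl, hμ1, hμ0, withDensity_apply _ hs, withDensity_apply _ hs, withDensity_apply _ hs,
      ← lintegral_const_mul _ h₁m.ennreal_ofReal, ← lintegral_const_mul _ h₀m.ennreal_ofReal,
      ← lintegral_add_left (h₁m.ennreal_ofReal.const_mul _)]
    refine lintegral_congr fun x => ?_
    rw [← ENNReal.ofReal_mul hl0.le, ← ENNReal.ofReal_mul hl1'.le,
      ← ENNReal.ofReal_add (mul_nonneg hl0.le (h₁0 x)) (mul_nonneg hl1'.le (h₀0 x))]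
  haveI hPl : IsProbabilityMeasure μl := by
    constructor
    rw [hmix Set.univ MeasurableSet.univ, measure_univ, measure_univ, mul_one, mul_one,
      ← ENNReal.ofReal_add hl0.le hl1'.le, show lam + (1 - lam) = 1 by ring,
      ENNReal.ofReal_one]
  -- EI part
  have hq0 : 0 < q := lt_trans one_pos hq
  have hF : lam * batchEI P c q f μ1 + (1 - lam) * batchEI P c q f μ0
      ≤ batchEI P c q f μl :=
    F_concave P q hq0 c C f hf_meas hf_bdd μ0 μ1 μl lam hl0 hl1 hmix
  -- Reg part
  obtain ⟨K, hK⟩ := isCompact_Icc.exists_bound_of_continuousOn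
    (s := Set.Icc (0:ℝ) Cm) Real.continuous_negMulLog.continuousOn
  have hKb : ∀ (ρ : EuclideanSpace ℝ (Fin d) → ℝ), (∀ x, 0 ≤ ρ x) → (∀ x, ρ x ≤ Cm) →
      ∀ x, |Real.negMulLog (ρ x)| ≤ K := by
    intro ρ hρ0 hρb x
    have := hK (ρ x) ⟨hρ0 x, hρb x⟩
    rwa [Real.norm_eq_abs] at this
  have hIn0 : Integrable (fun x => Real.negMulLog (ρ₀ x)) :=
    integrable_of_bdd_supp hD (Real.continuous_negMulLog.measurable.comp h₀m)
      (hKb ρ₀ h₀0 h₀Cm) (fun x hx => by rw [h₀s x hx, Real.negMulLog_zero])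
  have hIn1 : Integrable (fun x => Real.negMulLog (ρ₁ x)) :=
    integrable_of_bdd_supp hD (Real.continuous_negMulLog.measurable.comp h₁m)
      (hKb ρ₁ h₁0 h₁Cm) (fun x hx => by rw [h₁s x hx, Real.negMulLog_zero])
  have hInl : Integrable (fun x => Real.negMulLog (ρl x)) :=
    integrable_of_bdd_supp hD (Real.continuous_negMulLog.measurable.comp hlm)
      (hKb ρl hl0' hlCm) (fun x hx => by rw [hls x hx, Real.negMulLog_zero])
  have hReg_eq : ∀ ρ : EuclideanSpace ℝ (Fin d) → ℝ,
      Reg ρ = ∫ x, Real.negMulLog (ρ x) := by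
    intro ρ
    unfold Reg
    rw [← integral_neg]
    congr 1
    funext x
    rw [Real.negMulLog]; ring
  set Δ : EuclideanSpace ℝ (Fin d) → ℝ := fun x =>
    Real.negMulLog (ρl x)
      - (lam * Real.negMulLog (ρ₁ x) + (1 - lam) * Real.negMulLog (ρ₀ x)) with hΔ
  have hΔ0 : ∀ x, 0 ≤ Δ x := by
    intro x
    have := Real.concaveOn_negMulLog.2 (Set.mem_Ici.2 (h₁0 x)) (Set.mem_Ici.2 (h₀0 x))
      hl0.le hl1'.le (by ring)
    simp only [smul_eq_mul] at this
    have hx : ρl x = lam * ρ₁ x + (1 - lam) * ρ₀ x := rfl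
    simp only [hΔ, hx]
    linarith
  have hΔpos : ∀ x, ρ₀ x ≠ ρ₁ x → 0 < Δ x := by
    intro x hx
    have := Real.strictConcaveOn_negMulLog.2 (Set.mem_Ici.2 (h₁0 x)) (Set.mem_Ici.2 (h₀0 x))
      (Ne.symm hx) hl0 hl1' (by ring)
    simp only [smul_eq_mul] at this
    have hx' : ρl x = lam * ρ₁ x + (1 - lam) * ρ₀ x := rfl
    simp only [hΔ, hx']
    linarith
  have hΔint : Integrable Δ :=
    hInl.sub ((hIn1.const_mul lam).add (hIn0.const_mul (1 - lam)))
  have hΔpos' : 0 < ∫ x, Δ x := by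
    rw [integral_pos_iff_support_of_nonneg hΔ0 hΔint]
    refine lt_of_lt_of_le hne (measure_mono fun x hx => ?_)
    exact ne_of_gt (hΔpos x hx)
  have hIc : Integrable (fun x =>
      lam * Real.negMulLog (ρ₁ x) + (1 - lam) * Real.negMulLog (ρ₀ x)) volume :=
    (hIn1.const_mul lam).add (hIn0.const_mul (1 - lam))
  have hΔeq : Reg ρl - (lam * Reg ρ₁ + (1 - lam) * Reg ρ₀) = ∫ x, Δ x := by
    rw [hReg_eq ρl, hReg_eq ρ₁, hReg_eq ρ₀, ← integral_const_mul, ← integral_const_mul,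
      ← integral_add (hIn1.const_mul lam) (hIn0.const_mul (1 - lam)),
      ← integral_sub hInl hIc]
  have hReg : lam * Reg ρ₁ + (1 - lam) * Reg ρ₀ < Reg ρl := by
    rw [← hΔeq] at hΔpos'; linarith
  -- combine
  have e0 : batchEIDens P c q f ρ₀ = batchEI P c q f μ0 := rfl
  have e1 : batchEIDens P c q f ρ₁ = batchEI P c q f μ1 := rfl
  have el : batchEIDens P c q f ρl = batchEI P c q f μl := rfl
  rw [e0, e1, el]
  have hmul := mul_lt_mul_of_pos_left hReg hα
  nlinarith [hF, hmul]
end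

section
/- Derivative of the entropy term along a Stein perturbation: let Φ : ℝ^d → ℝ^d be continuously differentiable with bounded derivative DΦ, and let μ be a Borel probability measure on ℝ^d. Then the map ε ↦ ∫_{ℝ^d} log |det(I + ε DΦ(x))| dμ(x) is differentiable at ε = 0 with derivative ∫_{ℝ^d} trace(DΦ(x)) dμ(x) = ∫_{ℝ^d} (∇·Φ)(x) dμ(x). -/
open MeasureTheory

section SteinAux

variable {d : ℕ}

/-- Explicit derivative of `t ↦ det (1 + t • M)`. -/
noncomputable def steinD (M : Matrix (Fin d) (Fin d) ℝ) (ε : ℝ) : ℝ :=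
  ∑ σ : Equiv.Perm (Fin d), ((Equiv.Perm.sign σ : ℤ) : ℝ) *
    ∑ i, (∏ j ∈ Finset.univ.erase i,
      ((1 : Matrix (Fin d) (Fin d) ℝ) (σ j) j + ε * M (σ j) j)) * M (σ i) i

lemma stein_hasDerivAt_det (M : Matrix (Fin d) (Fin d) ℝ) (ε : ℝ) :
    HasDerivAt (fun t : ℝ => (1 + t • M).det) (steinD M ε) ε := by
  have h : ∀ t : ℝ, (1 + t • M).det
      = ∑ σ : Equiv.Perm (Fin d), ((Equiv.Perm.sign σ : ℤ) : ℝ) *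
          ∏ i, ((1 : Matrix (Fin d) (Fin d) ℝ) (σ i) i + t * M (σ i) i) := by
    intro t
    rw [Matrix.det_apply']
    refine Finset.sum_congr rfl fun σ _ => ?_
    refine congrArg _ (Finset.prod_congr rfl fun i _ => ?_)
    simp [Matrix.add_apply, Matrix.smul_apply, smul_eq_mul]
  simp only [h]
  unfold steinD
  refine HasDerivAt.fun_sum fun σ _ => ?_
  refine HasDerivAt.const_mul _ ?_
  have := HasDerivAt.fun_finsetProd (u := (Finset.univ : Finset (Fin d)))
    (f := fun i (t : ℝ) => (1 : Matrix (Fin d) (Fin d) ℝ) (σ i) i + t * M (σ i) i)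
    (f' := fun i => M (σ i) i) (x := ε)
    (fun i _ => (hasDerivAt_mul_const (M (σ i) i)).const_add _)
  simpa [smul_eq_mul] using this

/-- Uniform bound constant. -/
noncomputable def steinK (d : ℕ) (C : ℝ) : ℝ :=
  (d.factorial : ℝ) * ((d : ℝ) * ((1 + C) ^ d * C))

lemma steinK_nonneg {C : ℝ} (hC : 0 ≤ C) : 0 ≤ steinK d C := by
  unfold steinK; positivity

lemma steinD_bound {C : ℝ} (hC : 0 ≤ C) {M : Matrix (Fin d) (Fin d) ℝ}
    (hM : ∀ i j, |M i j| ≤ C) {ε : ℝ} (hε : |ε| ≤ 1) :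
    |steinD M ε| ≤ steinK d C := by
  have h1C : (1 : ℝ) ≤ 1 + C := by linarith
  have hfac : ∀ (σ : Equiv.Perm (Fin d)) (j : Fin d),
      |(1 : Matrix (Fin d) (Fin d) ℝ) (σ j) j + ε * M (σ j) j| ≤ 1 + C := by
    intro σ j
    have h1 : |(1 : Matrix (Fin d) (Fin d) ℝ) (σ j) j| ≤ 1 := by
      rw [Matrix.one_apply]; split <;> simp
    have h2 : |ε * M (σ j) j| ≤ C := by
      rw [abs_mul]
      calc |ε| * |M (σ j) j| ≤ 1 * C :=
            mul_le_mul hε (hM _ _) (abs_nonneg _) zero_le_one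
        _ = C := one_mul C
    calc |(1 : Matrix (Fin d) (Fin d) ℝ) (σ j) j + ε * M (σ j) j|
        ≤ |(1 : Matrix (Fin d) (Fin d) ℝ) (σ j) j| + |ε * M (σ j) j| := abs_add_le _ _
      _ ≤ 1 + C := add_le_add h1 h2
  have hprod : ∀ (σ : Equiv.Perm (Fin d)) (i : Fin d),
      |∏ j ∈ Finset.univ.erase i,
        ((1 : Matrix (Fin d) (Fin d) ℝ) (σ j) j + ε * M (σ j) j)| ≤ (1 + C) ^ d := by
    intro σ i
    rw [Finset.abs_prod]
    calc ∏ j ∈ Finset.univ.erase i,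
          |(1 : Matrix (Fin d) (Fin d) ℝ) (σ j) j + ε * M (σ j) j|
        ≤ ∏ _j ∈ Finset.univ.erase i, (1 + C) :=
          Finset.prod_le_prod (fun _ _ => abs_nonneg _) (fun j _ => hfac σ j)
      _ = (1 + C) ^ (Finset.univ.erase i).card := by rw [Finset.prod_const]
      _ ≤ (1 + C) ^ d := by
          apply pow_le_pow_right₀ h1C
          exact le_trans (Finset.card_le_card (Finset.erase_subset _ _)) (by simp)
  have hterm : ∀ σ : Equiv.Perm (Fin d),
      |((Equiv.Perm.sign σ : ℤ) : ℝ) *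
        ∑ i, (∏ j ∈ Finset.univ.erase i,
          ((1 : Matrix (Fin d) (Fin d) ℝ) (σ j) j + ε * M (σ j) j)) * M (σ i) i|
        ≤ (d : ℝ) * ((1 + C) ^ d * C) := by
    intro σ
    rw [abs_mul]
    have hs : |((Equiv.Perm.sign σ : ℤ) : ℝ)| = 1 := by
      rcases Int.units_eq_one_or (Equiv.Perm.sign σ) with h | h <;> simp [h]
    rw [hs, one_mul]
    calc |∑ i, (∏ j ∈ Finset.univ.erase i,
            ((1 : Matrix (Fin d) (Fin d) ℝ) (σ j) j + ε * M (σ j) j)) * M (σ i) i|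
        ≤ ∑ i, |(∏ j ∈ Finset.univ.erase i,
            ((1 : Matrix (Fin d) (Fin d) ℝ) (σ j) j + ε * M (σ j) j)) * M (σ i) i| :=
          Finset.abs_sum_le_sum_abs _ _
      _ ≤ ∑ _i : Fin d, (1 + C) ^ d * C := by
          refine Finset.sum_le_sum fun i _ => ?_
          rw [abs_mul]
          exact mul_le_mul (hprod σ i) (hM _ _) (abs_nonneg _) (by positivity)
      _ = (d : ℝ) * ((1 + C) ^ d * C) := by
          simp [Finset.sum_const, nsmul_eq_mul]
  calc |steinD M ε|
      ≤ ∑ σ : Equiv.Perm (Fin d), |((Equiv.Perm.sign σ : ℤ) : ℝ) *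
          ∑ i, (∏ j ∈ Finset.univ.erase i,
            ((1 : Matrix (Fin d) (Fin d) ℝ) (σ j) j + ε * M (σ j) j)) * M (σ i) i| :=
        Finset.abs_sum_le_sum_abs _ _
    _ ≤ ∑ _σ : Equiv.Perm (Fin d), (d : ℝ) * ((1 + C) ^ d * C) :=
        Finset.sum_le_sum fun σ _ => hterm σ
    _ = steinK d C := by
        simp [steinK, Finset.sum_const, nsmul_eq_mul, Fintype.card_perm]

lemma stein_delta_le_one {C : ℝ} (hC : 0 ≤ C) :
    1 / (2 * (steinK d C + 1)) ≤ 1 := by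
  have hK0 : 0 ≤ steinK d C := steinK_nonneg hC
  rw [div_le_one (by linarith)]
  linarith

lemma stein_det_lower {C : ℝ} (hC : 0 ≤ C) {M : Matrix (Fin d) (Fin d) ℝ}
    (hM : ∀ i j, |M i j| ≤ C) {ε : ℝ}
    (hε : |ε| ≤ 1 / (2 * (steinK d C + 1))) :
    (1 / 2 : ℝ) ≤ (1 + ε • M).det := by
  have hK0 : 0 ≤ steinK d C := steinK_nonneg hC
  have hε1 : |ε| ≤ 1 := hε.trans (stein_delta_le_one hC)
  have key : ‖(1 + ε • M).det - (1 + (0 : ℝ) • M).det‖ ≤ steinK d C * ‖ε - 0‖ := by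
    refine Convex.norm_image_sub_le_of_norm_hasDerivWithin_le
      (f := fun t : ℝ => (1 + t • M).det) (f' := steinD M)
      (fun t _ => (stein_hasDerivAt_det M t).hasDerivWithinAt)
      (fun t ht => ?_) (convex_closedBall (0 : ℝ) 1)
      (Metric.mem_closedBall_self zero_le_one)
      (by simpa [Real.dist_eq] using hε1)
    rw [Real.norm_eq_abs]
    exact steinD_bound hC hM (by simpa [Real.dist_eq] using Metric.mem_closedBall.1 ht)
  have h0 : (1 + (0 : ℝ) • M).det = 1 := by simp
  rw [h0, Real.norm_eq_abs, Real.norm_eq_abs, sub_zero] at key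
  have hmul : steinK d C * |ε| ≤ 1 / 2 := by
    have h1 := mul_le_mul_of_nonneg_left hε hK0
    have h2 : steinK d C * (1 / (2 * (steinK d C + 1))) ≤ 1 / 2 := by
      rw [mul_one_div, div_le_iff₀ (by linarith)]
      nlinarith
    linarith
  have := (abs_le.1 (key.trans hmul)).1
  linarith

lemma stein_lipschitz {C : ℝ} (hC : 0 ≤ C) {M : Matrix (Fin d) (Fin d) ℝ}
    (hM : ∀ i j, |M i j| ≤ C) :
    LipschitzOnWith (Real.nnabs (2 * steinK d C))
      (fun t : ℝ => Real.log ((1 + t • M).det))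
      (Metric.ball (0 : ℝ) (1 / (2 * (steinK d C + 1)))) := by
  have hK0 : 0 ≤ steinK d C := steinK_nonneg hC
  refine Convex.lipschitzOnWith_of_nnnorm_hasDerivWithin_le (convex_ball _ _)
    (f' := fun t => steinD M t / (1 + t • M).det) (fun t ht => ?_) (fun t ht => ?_)
  · have hmem : |t| ≤ 1 / (2 * (steinK d C + 1)) := by
      rw [Metric.mem_ball, Real.dist_eq, sub_zero] at ht; exact ht.le
    have hpos : (1 / 2 : ℝ) ≤ (1 + t • M).det := stein_det_lower hC hM hmem
    exact ((stein_hasDerivAt_det M t).log (by linarith)).hasDerivWithinAt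
  · have hmem : |t| ≤ 1 / (2 * (steinK d C + 1)) := by
      rw [Metric.mem_ball, Real.dist_eq, sub_zero] at ht; exact ht.le
    have hpos : (1 / 2 : ℝ) ≤ (1 + t • M).det := stein_det_lower hC hM hmem
    have hD := steinD_bound hC hM (hmem.trans (stein_delta_le_one hC))
    rw [← NNReal.coe_le_coe, coe_nnnorm, Real.coe_nnabs, Real.norm_eq_abs,
      abs_of_nonneg (by positivity : (0 : ℝ) ≤ 2 * steinK d C), abs_div,
      abs_of_pos (by linarith : (0 : ℝ) < (1 + t • M).det)]
    calc |steinD M t| / (1 + t • M).det ≤ steinK d C / (1 / 2) :=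
          div_le_div₀ hK0 hD one_half_pos hpos
      _ = 2 * steinK d C := by ring

lemma stein_hasDerivAt_log_det (M : Matrix (Fin d) (Fin d) ℝ) :
    HasDerivAt (fun t : ℝ => Real.log ((1 + t • M).det)) (Matrix.trace M) 0 := by
  have h1 : HasDerivAt (fun t : ℝ => (1 + t • M).det) (Matrix.trace M) 0 := by
    have h0 : (fun t : ℝ => (1 + t • M).det)
        = fun t => 1 + Matrix.trace M * t
            + Polynomial.eval t
                (Matrix.det (1 + (Polynomial.X : Polynomial ℝ) • M.map Polynomial.C)).divX.divX
              * t ^ 2 := by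
      funext t
      rw [Matrix.det_one_add_smul]
    rw [h0]
    have ha : HasDerivAt (fun t : ℝ => 1 + Matrix.trace M * t) (Matrix.trace M) 0 := by
      simpa using ((hasDerivAt_id (0 : ℝ)).const_mul (Matrix.trace M)).const_add 1
    have hb : HasDerivAt (fun t : ℝ => Polynomial.eval t
        (Matrix.det (1 + (Polynomial.X : Polynomial ℝ) • M.map Polynomial.C)).divX.divX * t ^ 2)
        0 0 := by
      have := (Polynomial.hasDerivAt
        (Matrix.det (1 + (Polynomial.X : Polynomial ℝ) • M.map Polynomial.C)).divX.divX
        (0 : ℝ)).fun_mul (hasDerivAt_pow 2 (0 : ℝ))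
      simpa using this
    simpa using ha.fun_add hb
  have h2 := h1.log (by simp)
  simpa using h2

end SteinAux

/-- Derivative of the entropy term along a Stein perturbation: for `Φ` continuously
differentiable with bounded derivative and `μ` a Borel probability measure, the map
`ε ↦ ∫ log |det(I + ε DΦ(x))| dμ(x)` is differentiable at `ε = 0` with derivative
`∫ trace(DΦ(x)) dμ(x)`, i.e. the integral of the divergence `∇·Φ`. -/
theorem stmt14 {d : ℕ}
    (Φ : EuclideanSpace ℝ (Fin d) → EuclideanSpace ℝ (Fin d))
    (hΦ : ContDiff ℝ 1 Φ) (hDΦ : ∃ C, ∀ x, ‖fderiv ℝ Φ x‖ ≤ C)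
    (μ : Measure (EuclideanSpace ℝ (Fin d))) [IsProbabilityMeasure μ] :
    HasDerivAt (fun ε : ℝ => ∫ x, Real.log
        |(ContinuousLinearMap.id ℝ (EuclideanSpace ℝ (Fin d)) + ε • fderiv ℝ Φ x).det| ∂μ)
      (∫ x, LinearMap.trace ℝ (EuclideanSpace ℝ (Fin d)) (fderiv ℝ Φ x).toLinearMap ∂μ)
      0 := by
  classical
  obtain ⟨C₀, hC₀⟩ := hDΦ
  set C : ℝ := max C₀ 0 with hCdef
  have hC : 0 ≤ C := le_max_right _ _
  have hA : ∀ x, ‖fderiv ℝ Φ x‖ ≤ C := fun x => (hC₀ x).trans (le_max_left _ _)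
  set b : Module.Basis (Fin d) ℝ (EuclideanSpace ℝ (Fin d)) :=
    (EuclideanSpace.basisFun (Fin d) ℝ).toBasis with hb
  set Mx : EuclideanSpace ℝ (Fin d) → Matrix (Fin d) (Fin d) ℝ :=
    fun x => LinearMap.toMatrix b b (fderiv ℝ Φ x).toLinearMap with hMx
  have hdet : ∀ (ε : ℝ) x,
      (ContinuousLinearMap.id ℝ (EuclideanSpace ℝ (Fin d)) + ε • fderiv ℝ Φ x).det
        = (1 + ε • Mx x).det := by
    intro ε x
    show LinearMap.det _ = _
    rw [← LinearMap.det_toMatrix b]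
    congr 1
    have hcoe : ((ContinuousLinearMap.id ℝ (EuclideanSpace ℝ (Fin d)) + ε • fderiv ℝ Φ x :
        EuclideanSpace ℝ (Fin d) →L[ℝ] EuclideanSpace ℝ (Fin d)) :
          EuclideanSpace ℝ (Fin d) →ₗ[ℝ] EuclideanSpace ℝ (Fin d))
        = LinearMap.id + ε • (fderiv ℝ Φ x).toLinearMap := by
      ext v; simp
    rw [hcoe, map_add, _root_.map_smul, LinearMap.toMatrix_id]
  have htr : ∀ x, LinearMap.trace ℝ (EuclideanSpace ℝ (Fin d)) (fderiv ℝ Φ x).toLinearMap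
      = Matrix.trace (Mx x) := fun x => LinearMap.trace_eq_matrix_trace ℝ b _
  have hMbound : ∀ x i j, |Mx x i j| ≤ C := by
    intro x i j
    have hentry : Mx x i j = (fderiv ℝ Φ x (b j)) i := by
      simp only [hMx, LinearMap.toMatrix_apply, ContinuousLinearMap.coe_coe, hb,
        OrthonormalBasis.coe_toBasis_repr_apply, EuclideanSpace.basisFun_repr]
    rw [hentry]
    have hcoord : |(fderiv ℝ Φ x (b j)) i| ≤ ‖fderiv ℝ Φ x (b j)‖ := by
      rw [EuclideanSpace.norm_eq]
      calc |(fderiv ℝ Φ x (b j)) i| = Real.sqrt (‖(fderiv ℝ Φ x (b j)) i‖ ^ 2) := by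
            rw [Real.sqrt_sq_eq_abs]; simp
        _ ≤ Real.sqrt (∑ k, ‖(fderiv ℝ Φ x (b j)) k‖ ^ 2) := by
            apply Real.sqrt_le_sqrt
            exact Finset.single_le_sum (f := fun k => ‖(fderiv ℝ Φ x (b j)) k‖ ^ 2)
              (fun k _ => by positivity) (Finset.mem_univ i)
    have hbj : ‖(b j : EuclideanSpace ℝ (Fin d))‖ = 1 := by
      simp [hb, EuclideanSpace.basisFun_apply, EuclideanSpace.norm_single]
    calc |(fderiv ℝ Φ x (b j)) i| ≤ ‖fderiv ℝ Φ x (b j)‖ := hcoord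
      _ ≤ ‖fderiv ℝ Φ x‖ * ‖(b j : EuclideanSpace ℝ (Fin d))‖ :=
          ContinuousLinearMap.le_opNorm _ _
      _ = ‖fderiv ℝ Φ x‖ := by rw [hbj, mul_one]
      _ ≤ C := hA x
  have hAcont : Continuous fun x => fderiv ℝ Φ x := hΦ.continuous_fderiv one_ne_zero
  have hMcont : Continuous Mx := by
    have : Mx = fun x => ((LinearMap.toMatrix b b).toLinearMap.comp
        (ContinuousLinearMap.coeLM ℝ)) (fderiv ℝ Φ x) := rfl
    rw [this]
    exact (LinearMap.continuous_of_finiteDimensional _).comp hAcont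
  have htrcont : Continuous fun x => Matrix.trace (Mx x) :=
    ((Matrix.traceLinearMap (Fin d) ℝ ℝ).continuous_of_finiteDimensional).comp hMcont
  simp only [Real.log_abs, hdet, htr]
  have hK0 : 0 ≤ steinK d C := steinK_nonneg hC
  have hδpos : 0 < 1 / (2 * (steinK d C + 1)) := by positivity
  have key := hasDerivAt_integral_of_dominated_loc_of_lip (μ := μ) (x₀ := (0 : ℝ))
    (F := fun ε x => Real.log ((1 + ε • Mx x).det))
    (F' := fun x => Matrix.trace (Mx x))
    (bound := fun _ => 2 * steinK d C) (Metric.ball_mem_nhds _ hδpos)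
    (Filter.Eventually.of_forall fun ε => by
      have hcont : Continuous fun x => (1 + ε • Mx x).det :=
        (continuous_const.add (hMcont.const_smul ε)).matrix_det
      exact (Real.measurable_log.comp hcont.measurable).aestronglyMeasurable)
    ((integrable_const (0 : ℝ)).congr (Filter.Eventually.of_forall fun x => by simp))
    htrcont.aestronglyMeasurable
    (Filter.Eventually.of_forall fun x => stein_lipschitz hC (hMbound x))
    (integrable_const _)
    (Filter.Eventually.of_forall fun x => stein_hasDerivAt_log_det (Mx x))
  exact key.2
end
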